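/- With R^{[B]}_{j+1/2, m+1/2} as above and 0 ≤ j ≤ 2m, one has R^{[B]}_{j+1/2, m+1/2}(τ, v−τ) = −e^{πi(2m+1)(τ−2v)} R^{[B]}_{j+1/2, m+1/2}(τ, v) + 2 e^{−πiτ(j+1/2)²/(2m+1) + 2πiτ(j+1/2)} e^{−2πi(j+1/2)v}. -/

import Mathlib

noncomputable section

open Complex

/-- Zwegers-type error function `E(x) = 2∫₀ˣ e^{−πu²} du`. -/
def Efun (x : ℝ) : ℝ := 2 * ∫ u in (0 : ℝ)..x, Real.exp (-Real.pi * u ^ 2)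

/-- The Zwegers-type function `R^{[B]}_{j+1/2, m+1/2}(τ,v)`: the sum over half-integers
`n ≡ j + 1/2 mod (2m+1)`, parametrized by `n = j + 1/2 + (2m+1)k`, `k ∈ ℤ`. -/
def RB (m : ℕ) (j : ℤ) (τ v : ℂ) : ℂ :=
  ∑' k : ℤ,
    (-1 : ℂ) ^ ((2 * (m : ℤ) + 1) * k) *
      (((Real.sign ((j : ℝ) + 1 / 2 + (2 * (m : ℝ) + 1) * (k : ℝ)) -
          Efun ((((j : ℝ) + 1 / 2 + (2 * (m : ℝ) + 1) * (k : ℝ)) +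
              (2 * (m : ℝ) + 1) * (v.im / τ.im)) *
            Real.sqrt (τ.im / ((m : ℝ) + 1 / 2)))) : ℝ) : ℂ) *
      Complex.exp (-(Real.pi : ℂ) * I * ((j : ℂ) + 1 / 2 + (2 * (m : ℂ) + 1) * (k : ℂ)) ^ 2 * τ /
          (2 * (m : ℂ) + 1) -
        2 * (Real.pi : ℂ) * I * ((j : ℂ) + 1 / 2 + (2 * (m : ℂ) + 1) * (k : ℂ)) * v)

/-! Replacing `v` by `v - τ` turns the Gaussian factor at `n` into `e^{πi(2m+1)(τ-2v)}` times the
one at `n - (2m+1)`, and the argument of `E` at `n` into the one at `n - (2m+1)`; only `sgn n` does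
not move. On the progression `n ≡ j + 1/2`, with `0 < j + 1/2 < 2m+1`, the signs of `n` and
`n - (2m+1)` differ only at `n = j + 1/2`, which produces the extra term. Reindexing the series
needs absolute convergence: `|sgn x - E x| ≤ e^{-πx²}`, and for all but finitely many `n` the sign
of `n` is that of the argument of `E`, so the summands are eventually dominated by the terms of a
Jacobi theta series. -/

open MeasureTheory Set Filter

lemma integrable_exp_neg_pi_mul_sq : Integrable fun u : ℝ => Real.exp (-Real.pi * u ^ 2) := by
  simpa using integrable_exp_neg_mul_sq Real.pi_pos

lemma Efun_neg (x : ℝ) : Efun (-x) = -Efun x := by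
  have h := intervalIntegral.integral_comp_neg (a := 0) (b := -x)
    fun u => Real.exp (-Real.pi * u ^ 2)
  simp only [neg_neg, neg_zero, neg_sq] at h
  rw [Efun, Efun, h, intervalIntegral.integral_symm]
  ring

lemma one_sub_Efun (x : ℝ) : 1 - Efun x = 2 * ∫ u in Ioi x, Real.exp (-Real.pi * u ^ 2) := by
  have h := intervalIntegral.integral_Ioi_sub_Ioi' (a := 0) (b := x)
    integrable_exp_neg_pi_mul_sq.integrableOn integrable_exp_neg_pi_mul_sq.integrableOn
  rw [integral_gaussian_Ioi, div_self Real.pi_ne_zero, Real.sqrt_one] at h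
  rw [Efun, ← h]
  ring

lemma integral_Ioi_exp_neg_pi_mul_sq_le {x : ℝ} (hx : 0 ≤ x) :
    ∫ u in Ioi x, Real.exp (-Real.pi * u ^ 2) ≤ Real.exp (-Real.pi * x ^ 2) / 2 := by
  have hshift := (measurePreserving_add_right (volume : Measure ℝ) x).setIntegral_preimage_emb
    (measurableEmbedding_addRight x) (fun u => Real.exp (-Real.pi * u ^ 2)) (Ioi x)
  have hpre : (fun u : ℝ => u + x) ⁻¹' Ioi x = Ioi 0 := by
    ext u
    simp
  rw [← hshift, hpre]
  calc ∫ u in Ioi 0, Real.exp (-Real.pi * (u + x) ^ 2)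
      ≤ ∫ u in Ioi 0, Real.exp (-Real.pi * x ^ 2) * Real.exp (-Real.pi * u ^ 2) := by
        refine setIntegral_mono_on (integrable_exp_neg_pi_mul_sq.comp_add_right x).integrableOn
          (integrable_exp_neg_pi_mul_sq.const_mul _).integrableOn measurableSet_Ioi fun u hu => ?_
        rw [← Real.exp_add, Real.exp_le_exp]
        nlinarith [mul_nonneg hu.le hx, Real.pi_pos]
    _ = Real.exp (-Real.pi * x ^ 2) / 2 := by
        rw [integral_const_mul, integral_gaussian_Ioi, div_self Real.pi_ne_zero, Real.sqrt_one]
        ring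

lemma abs_sign_sub_Efun_le (x : ℝ) : |Real.sign x - Efun x| ≤ Real.exp (-Real.pi * x ^ 2) := by
  have of_pos : ∀ y : ℝ, 0 < y → |Real.sign y - Efun y| ≤ Real.exp (-Real.pi * y ^ 2) := by
    intro y hy
    have htail : 0 ≤ ∫ u in Ioi y, Real.exp (-Real.pi * u ^ 2) :=
      setIntegral_nonneg measurableSet_Ioi fun _ _ => (Real.exp_pos _).le
    rw [Real.sign_of_pos hy, one_sub_Efun, abs_of_nonneg (by positivity)]
    linarith [integral_Ioi_exp_neg_pi_mul_sq_le hy.le]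
  rcases lt_trichotomy x 0 with hx | rfl | hx
  · have h := of_pos (-x) (neg_pos.2 hx)
    rwa [Real.sign_of_pos (neg_pos.2 hx), Efun_neg, neg_sq, ← abs_neg, neg_sub', neg_neg,
      ← Real.sign_of_neg hx] at h
  · simp [Efun]
  · exact of_pos x hx

lemma Real.sign_mul_of_pos {x c : ℝ} (hc : 0 < c) : Real.sign (x * c) = Real.sign x := by
  rcases lt_trichotomy x 0 with hx | rfl | hx
  · rw [Real.sign_of_neg hx, Real.sign_of_neg (mul_neg_of_neg_of_pos hx hc)]
  · rw [zero_mul]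
  · rw [Real.sign_of_pos hx, Real.sign_of_pos (mul_pos hx hc)]

lemma Real.sign_add_of_abs_lt {n c : ℝ} (h : |c| < |n|) : Real.sign (n + c) = Real.sign n := by
  rcases lt_trichotomy n 0 with hn | rfl | hn
  · rw [abs_of_neg hn] at h
    rw [Real.sign_of_neg hn, Real.sign_of_neg (by linarith [le_abs_self c])]
  · exact absurd h (by simp)
  · rw [abs_of_pos hn] at h
    rw [Real.sign_of_pos hn, Real.sign_of_pos (by linarith [neg_abs_le c])]

lemma eventually_sign_add_mul_add_eq {M : ℝ} (hM : M ≠ 0) (a c : ℝ) :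
    ∀ᶠ k : ℤ in cofinite, Real.sign (a + M * k + c) = Real.sign (a + M * k) := by
  have hk : Tendsto (fun k : ℤ => |M| * |(k : ℝ)| - |a|) cofinite atTop :=
    tendsto_atTop_add_const_right _ _ <| (tendsto_norm_cocompact_atTop.comp
      Int.tendsto_coe_cofinite).const_mul_atTop (abs_pos.2 hM)
  filter_upwards [hk.eventually_gt_atTop |c|] with k hck
  refine Real.sign_add_of_abs_lt (hck.trans_le ?_)
  have h := abs_sub_abs_le_abs_sub (M * k) (-a)
  rw [abs_neg, sub_neg_eq_add, add_comm, abs_mul] at h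
  exact h

lemma sign_add_mul_sub_sign {a M : ℝ} (ha : 0 < a) (haM : a < M) (k : ℤ) :
    Real.sign (a + M * k) - Real.sign (a + M * k - M) = if k = 0 then 2 else 0 := by
  rcases lt_trichotomy k 0 with hk | rfl | hk
  · have hk' : (k : ℝ) ≤ -1 := by exact_mod_cast Int.le_sub_one_of_lt hk
    rw [if_neg hk.ne, Real.sign_of_neg (by nlinarith), Real.sign_of_neg (by nlinarith)]
    norm_num
  · rw [if_pos rfl, Int.cast_zero, mul_zero, add_zero, Real.sign_of_pos ha,
      Real.sign_of_neg (sub_neg.2 haM)]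
    norm_num
  · have hk' : (1 : ℝ) ≤ k := by exact_mod_cast hk
    rw [if_neg hk.ne', Real.sign_of_pos (by nlinarith), Real.sign_of_pos (by nlinarith)]
    norm_num

section ZwegersTerm

variable (M : ℝ) (τ v : ℂ)

def zwegersExp (n : ℝ) : ℂ :=
  cexp (-(Real.pi : ℂ) * I * n ^ 2 * τ / M - 2 * Real.pi * I * n * v)

/-- The summand of `R^{[B]}` at the half-integer `n` without its sign `(-1)^{n-(j+1/2)}`, when
`M = 2m + 1` (so that `√(2 Im τ / M) = √(Im τ / (m + 1/2))`). -/
def zwegersTerm (n : ℝ) : ℂ :=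
  ((Real.sign n - Efun ((n + M * (v.im / τ.im)) * √(2 * τ.im / M)) : ℝ) : ℂ) * zwegersExp M τ v n

variable {M τ v}

lemma norm_zwegersExp (n : ℝ) :
    ‖zwegersExp M τ v n‖ = Real.exp (Real.pi * n ^ 2 * τ.im / M + 2 * Real.pi * n * v.im) := by
  rw [zwegersExp, Complex.norm_exp,
    show -(Real.pi : ℂ) * I * n ^ 2 * τ / M - 2 * Real.pi * I * n * v
      = ((-Real.pi * n ^ 2 / M : ℝ) : ℂ) * τ * I + ((-2 * Real.pi * n : ℝ) : ℂ) * v * I by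
      push_cast; ring,
    add_re, mul_I_re, im_ofReal_mul, mul_I_re, im_ofReal_mul]
  congr 1
  ring

lemma zwegersExp_sub_self (hM : M ≠ 0) (n : ℝ) :
    zwegersExp M τ (v - τ) n =
      cexp (Real.pi * I * M * (τ - 2 * v)) * zwegersExp M τ v (n - M) := by
  have hM' : (M : ℂ) ≠ 0 := ofReal_ne_zero.2 hM
  rw [zwegersExp, zwegersExp, ← Complex.exp_add]
  congr 1
  push_cast
  field_simp
  ring

lemma zwegersTerm_sub_self (hM : M ≠ 0) (hτ : τ.im ≠ 0) (n : ℝ) :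
    zwegersTerm M τ (v - τ) n =
      cexp (Real.pi * I * M * (τ - 2 * v)) *
        (zwegersTerm M τ v (n - M) +
          ((Real.sign n - Real.sign (n - M) : ℝ) : ℂ) * zwegersExp M τ v (n - M)) := by
  have harg : n + M * ((v - τ).im / τ.im) = n - M + M * (v.im / τ.im) := by
    rw [sub_im]
    field_simp
    ring
  rw [zwegersTerm, zwegersTerm, harg, zwegersExp_sub_self hM]
  push_cast
  ring

lemma norm_zwegersTerm_le_norm_jacobiTheta₂_term (hM : 0 < M) (hτ : 0 < τ.im) {a : ℝ} {k : ℤ}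
    (hsign : Real.sign (a + M * k + M * (v.im / τ.im)) = Real.sign (a + M * k)) :
    ‖zwegersTerm M τ v (a + M * k)‖ ≤ ‖jacobiTheta₂_term k (a * τ + M * v) (M * τ)‖ := by
  set X := (a + M * k + M * (v.im / τ.im)) * √(2 * τ.im / M)
  have hX : Real.sign X = Real.sign (a + M * k) := by
    rw [Real.sign_mul_of_pos (Real.sqrt_pos.2 (by positivity)), hsign]
  have hXsq : X ^ 2 = (a + M * k + M * (v.im / τ.im)) ^ 2 * (2 * τ.im / M) := by
    rw [mul_pow, Real.sq_sqrt (by positivity)]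
  have hexp : -Real.pi * k ^ 2 * (M * τ.im) - 2 * Real.pi * k * (a * τ.im + M * v.im)
      - (-Real.pi * X ^ 2 + (Real.pi * (a + M * k) ^ 2 * τ.im / M
        + 2 * Real.pi * (a + M * k) * v.im))
      = Real.pi * τ.im / M * ((a + M * (v.im / τ.im)) ^ 2 + (M * (v.im / τ.im)) ^ 2) := by
    rw [hXsq]
    field_simp
    ring
  rw [zwegersTerm, norm_mul, norm_real, Real.norm_eq_abs, norm_zwegersExp, ← hX,
    norm_jacobiTheta₂_term]
  calc _ ≤ Real.exp (-Real.pi * X ^ 2) * _ :=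
        mul_le_mul_of_nonneg_right (abs_sign_sub_Efun_le X) (Real.exp_pos _).le
    _ = _ := (Real.exp_add _ _).symm
    _ ≤ _ := by
        simp only [add_im, im_ofReal_mul]
        rw [Real.exp_le_exp]
        linarith [hexp, show 0 ≤ Real.pi * τ.im / M * ((a + M * (v.im / τ.im)) ^ 2
          + (M * (v.im / τ.im)) ^ 2) by positivity]

lemma summable_zwegersTerm_add_mul (hM : 0 < M) (hτ : 0 < τ.im) (a : ℝ) :
    Summable fun k : ℤ => zwegersTerm M τ v (a + M * k) :=
  ((summable_jacobiTheta₂_term_iff _ _).2 (by simpa using mul_pos hM hτ)).norm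
    |>.of_norm_bounded_eventually <| (eventually_sign_add_mul_add_eq hM.ne' a _).mono
      fun _ hk => norm_zwegersTerm_le_norm_jacobiTheta₂_term hM hτ hk

end ZwegersTerm

lemma tsum_eq_mul_tsum_add_of_eq_shift {α : Type*} [Semiring α] [TopologicalSpace α]
    [IsTopologicalSemiring α] [T2Space α] {f g : ℤ → α} (hf : Summable f) {c d : α}
    (h : ∀ k, g k = c * f (k - 1) + if k = 0 then d else 0) :
    ∑' k, g k = c * ∑' k, f k + d := by
  have hf' : Summable fun k => f (k - 1) := (Equiv.subRight 1).summable_iff.2 hf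
  have hshift : ∑' k, f (k - 1) = ∑' k, f k := (Equiv.subRight 1).tsum_eq f
  have hsingle : Summable fun k : ℤ => if k = 0 then d else 0 := (hasSum_ite_eq 0 d).summable
  rw [tsum_congr h, (hf'.mul_left c).tsum_add hsingle, hf'.tsum_mul_left, tsum_ite_eq, hshift]

def RBterm (m : ℕ) (j : ℤ) (τ v : ℂ) (k : ℤ) : ℂ :=
  (-1 : ℂ) ^ ((2 * (m : ℤ) + 1) * k) * zwegersTerm (2 * m + 1) τ v (j + 1 / 2 + (2 * m + 1) * k)

lemma RB_eq_tsum_RBterm (m : ℕ) (j : ℤ) (τ v : ℂ) : RB m j τ v = ∑' k, RBterm m j τ v k := by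
  refine tsum_congr fun k => ?_
  rw [RBterm, zwegersTerm, zwegersExp,
    show 2 * τ.im / (2 * m + 1) = τ.im / (m + 1 / 2) by field_simp]
  push_cast
  rw [mul_assoc]

lemma summable_RBterm (m : ℕ) (j : ℤ) {τ : ℂ} (v : ℂ) (hτ : 0 < τ.im) :
    Summable (RBterm m j τ v) :=
  (summable_zwegersTerm_add_mul (M := 2 * m + 1) (by positivity) hτ _).norm.of_norm_bounded
    fun k => by rw [RBterm, norm_mul, norm_zpow, norm_neg, norm_one, one_zpow, one_mul]

lemma RBterm_sub_self {m : ℕ} {j : ℤ} (hj0 : 0 ≤ j) (hj1 : j ≤ 2 * (m : ℤ)) {τ : ℂ}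
    (hτ : τ.im ≠ 0) (v : ℂ) (k : ℤ) :
    RBterm m j τ (v - τ) k =
      -cexp (Real.pi * I * (2 * (m : ℂ) + 1) * (τ - 2 * v)) * RBterm m j τ v (k - 1) +
        if k = 0 then
          2 * cexp (-(Real.pi : ℂ) * I * τ * ((j : ℂ) + 1 / 2) ^ 2 / (2 * (m : ℂ) + 1) +
              2 * (Real.pi : ℂ) * I * τ * ((j : ℂ) + 1 / 2)) *
            cexp (-(2 * (Real.pi : ℂ) * I) * ((j : ℂ) + 1 / 2) * v)
        else 0 := by
  have hM : (2 * m + 1 : ℝ) ≠ 0 := by positivity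
  have hMc : (2 * m + 1 : ℂ) ≠ 0 := by exact_mod_cast hM
  have hj1' : (j : ℝ) ≤ 2 * m := by exact_mod_cast hj1
  have hjump := sign_add_mul_sub_sign (a := (j : ℝ) + 1 / 2) (M := 2 * m + 1)
    (by positivity) (by linarith) k
  have hodd : (-1 : ℂ) ^ ((2 * (m : ℤ) + 1) * k) = -(-1) ^ ((2 * (m : ℤ) + 1) * (k - 1)) := by
    rw [mul_sub, mul_one, zpow_sub₀ (by norm_num), Odd.neg_one_zpow ⟨m, rfl⟩]
    ring
  have hprev : (j : ℝ) + 1 / 2 + (2 * m + 1) * k - (2 * m + 1)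
      = j + 1 / 2 + (2 * m + 1) * ((k - 1 : ℤ) : ℝ) := by
    push_cast
    ring
  rw [RBterm, RBterm, zwegersTerm_sub_self hM hτ, hjump, hprev, mul_add, mul_add,
    ← hprev]
  congr 1
  · rw [hodd]
    push_cast
    ring
  split_ifs with hk
  · subst hk
    rw [mul_zero, zpow_zero, one_mul, zwegersExp, Int.cast_zero, mul_zero, add_zero,
      mul_left_comm, ← Complex.exp_add, mul_assoc (2 : ℂ) (cexp _), ← Complex.exp_add]
    push_cast
    congr 2
    field_simp
    ring
  · simp

/-- For `0 ≤ j ≤ 2m`: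
`R^{[B]}_{j+1/2,m+1/2}(τ, v−τ) = −e^{πi(2m+1)(τ−2v)} R^{[B]}_{j+1/2,m+1/2}(τ,v)
 + 2 e^{−πiτ(j+1/2)²/(2m+1) + 2πiτ(j+1/2)} e^{−2πi(j+1/2)v}`. -/
theorem stmt16 (m : ℕ) (j : ℤ) (hj0 : 0 ≤ j) (hj1 : j ≤ 2 * (m : ℤ))
    (τ v : ℂ) (hτ : 0 < τ.im) :
    RB m j τ (v - τ) =
      -Complex.exp ((Real.pi : ℂ) * I * (2 * (m : ℂ) + 1) * (τ - 2 * v)) * RB m j τ v +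
        2 * Complex.exp (-(Real.pi : ℂ) * I * τ * ((j : ℂ) + 1 / 2) ^ 2 / (2 * (m : ℂ) + 1) +
            2 * (Real.pi : ℂ) * I * τ * ((j : ℂ) + 1 / 2)) *
          Complex.exp (-(2 * (Real.pi : ℂ) * I) * ((j : ℂ) + 1 / 2) * v) := by
  rw [RB_eq_tsum_RBterm, RB_eq_tsum_RBterm]
  exact tsum_eq_mul_tsum_add_of_eq_shift (summable_RBterm m j v hτ)
    (RBterm_sub_self hj0 hj1 hτ.ne' v)
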